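/- Let P be a p×p permutation matrix, L a p×p real unit lower-triangular matrix, Q a p×p real orthogonal matrix, and Λ = diag(λ_1, …, λ_p) a real diagonal matrix, and set H̄ = Pᵀ L Q Λ Qᵀ Lᵀ P. Let λ̄ > 0 and assume the spectral norm of H̄ satisfies ‖H̄‖₂ ≤ λ̄ (equivalently, every eigenvalue λ of H̄ satisfies |λ| ≤ λ̄). Let τ > 0, let Λ̄ be the clipped diagonal matrix with entries max{τ, |λ_j|}, and set H̄̄ = Pᵀ L Q Λ̄ Qᵀ Lᵀ P. Then λ_max(H̄̄) ≤ σ_max(L)² · max{ τ, λ̄/σ_min(L)² }, where σ_min(L) and σ_max(L) are the smallest and largest singular values of L. -/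

import Mathlib

open Matrix

/-- The Euclidean norm on `ℝ^p` (vectors identified with `Fin p → ℝ`). -/
noncomputable def euclNorm {p : ℕ} (x : Fin p → ℝ) : ℝ := Real.sqrt (∑ i, x i ^ 2)

/-- The largest eigenvalue of a symmetric real matrix, characterized as the supremum
of the Rayleigh quotient `xᵀ A x / (xᵀ x)` over nonzero `x`. -/
noncomputable def lambdaMax {p : ℕ} (A : Matrix (Fin p) (Fin p) ℝ) : ℝ :=
  ⨆ x : {x : Fin p → ℝ // x ≠ 0}, x.1 ⬝ᵥ A.mulVec x.1 / euclNorm x.1 ^ 2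

/-- The smallest singular value of a real matrix `L`, characterized as the infimum of
`‖L x‖ / ‖x‖` over nonzero `x`. -/
noncomputable def sigmaMin {p : ℕ} (L : Matrix (Fin p) (Fin p) ℝ) : ℝ :=
  ⨅ x : {x : Fin p → ℝ // x ≠ 0}, euclNorm (L.mulVec x.1) / euclNorm x.1

/-- The largest singular value of a real matrix `L`, characterized as the supremum of
`‖L x‖ / ‖x‖` over nonzero `x`. -/
noncomputable def sigmaMax {p : ℕ} (L : Matrix (Fin p) (Fin p) ℝ) : ℝ :=
  ⨆ x : {x : Fin p → ℝ // x ≠ 0}, euclNorm (L.mulVec x.1) / euclNorm x.1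

/-!
Write `H̄̄ = Bᵀ Λ̄ B` with `B = Qᵀ Lᵀ P`, so that `xᵀ H̄̄ x = ∑ⱼ max{τ, |λⱼ|} (B x)ⱼ²`. As `Q` and
`P` are orthogonal, `σ_min(L) ‖x‖ ≤ ‖B x‖ ≤ σ_max(L) ‖x‖`. Testing the hypothesis on the `x` with
`B x = eⱼ` gives `xᵀ H̄ x = λⱼ` and `‖x‖ ≤ 1 / σ_min(L)`, hence `|λⱼ| ≤ λ̄ / σ_min(L)²`. So every
clipped entry is at most `max{τ, λ̄ / σ_min(L)²}`, and the Rayleigh quotient of `H̄̄` is at most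
`σ_max(L)²` times this.
-/

section

variable {p : ℕ}

theorem euclNorm_nonneg (x : Fin p → ℝ) : 0 ≤ euclNorm x := Real.sqrt_nonneg _

theorem euclNorm_sq (x : Fin p → ℝ) : euclNorm x ^ 2 = ∑ i, x i ^ 2 :=
  Real.sq_sqrt (Finset.sum_nonneg fun _ _ => sq_nonneg _)

theorem dotProduct_self_eq_euclNorm_sq (x : Fin p → ℝ) : x ⬝ᵥ x = euclNorm x ^ 2 := by
  rw [euclNorm_sq]
  simp only [dotProduct, sq]

@[simp]
theorem euclNorm_zero : euclNorm (0 : Fin p → ℝ) = 0 := by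
  simp [euclNorm]

theorem euclNorm_pos {x : Fin p → ℝ} (hx : x ≠ 0) : 0 < euclNorm x := by
  obtain ⟨i, hi⟩ := Function.ne_iff.mp hx
  exact Real.sqrt_pos.mpr <| Finset.sum_pos' (fun _ _ => sq_nonneg _)
    ⟨i, Finset.mem_univ i, sq_pos_of_ne_zero hi⟩

theorem euclNorm_single (j : Fin p) : euclNorm (Pi.single j 1 : Fin p → ℝ) = 1 := by
  simp [euclNorm, Pi.single_apply]

theorem dotProduct_le_euclNorm_mul (x y : Fin p → ℝ) : x ⬝ᵥ y ≤ euclNorm x * euclNorm y :=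
  Real.sum_mul_le_sqrt_mul_sqrt Finset.univ x y

theorem sum_mul_sq_le_mul_euclNorm_sq {c : Fin p → ℝ} {m : ℝ} (hc : ∀ i, c i ≤ m)
    (y : Fin p → ℝ) : ∑ i, c i * y i ^ 2 ≤ m * euclNorm y ^ 2 := by
  rw [euclNorm_sq, Finset.mul_sum]
  gcongr with i
  exact hc i

theorem dotProduct_mulVec_eq_transpose_mulVec_dotProduct (M : Matrix (Fin p) (Fin p) ℝ)
    (x y : Fin p → ℝ) : x ⬝ᵥ M *ᵥ y = Mᵀ *ᵥ x ⬝ᵥ y := by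
  rw [dotProduct_mulVec, mulVec_transpose]

theorem euclNorm_mulVec_of_transpose_mul_self {A : Matrix (Fin p) (Fin p) ℝ} (hA : Aᵀ * A = 1)
    (x : Fin p → ℝ) : euclNorm (A *ᵥ x) = euclNorm x := by
  have h : euclNorm (A *ᵥ x) ^ 2 = euclNorm x ^ 2 := by
    rw [← dotProduct_self_eq_euclNorm_sq, ← dotProduct_self_eq_euclNorm_sq,
      dotProduct_mulVec_eq_transpose_mulVec_dotProduct, mulVec_mulVec, hA, one_mulVec]
  exact (pow_left_inj₀ (euclNorm_nonneg _) (euclNorm_nonneg _) two_ne_zero).mp h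

theorem transpose_permMatrix_mul_self (σ : Equiv.Perm (Fin p)) :
    (σ.permMatrix ℝ)ᵀ * σ.permMatrix ℝ = 1 := by
  rw [transpose_permMatrix, ← permMatrix_mul, mul_inv_cancel, permMatrix_one]

theorem euclNorm_mulVec_le_frobenius (M : Matrix (Fin p) (Fin p) ℝ) (x : Fin p → ℝ) :
    euclNorm (M *ᵥ x) ≤ √(∑ i, ∑ j, M i j ^ 2) * euclNorm x := by
  rw [euclNorm, euclNorm, ← Real.sqrt_mul (by positivity), Finset.sum_mul]
  gcongr with i
  exact Finset.sum_mul_sq_le_sq_mul_sq Finset.univ (M i) x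

theorem isUnit_of_mul_euclNorm_le {B : Matrix (Fin p) (Fin p) ℝ} {s : ℝ} (hs : 0 < s)
    (hB : ∀ x, s * euclNorm x ≤ euclNorm (B *ᵥ x)) : IsUnit B := by
  refine mulVec_injective_iff_isUnit.mp fun x y hxy => ?_
  by_contra hne
  have h := hB (x - y)
  rw [mulVec_sub, hxy, sub_self, euclNorm_zero] at h
  exact (mul_pos hs (euclNorm_pos (sub_ne_zero.mpr hne))).not_ge h

theorem dotProduct_mulVec_transpose_mul_diagonal_mul (B : Matrix (Fin p) (Fin p) ℝ)
    (c x : Fin p → ℝ) :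
    x ⬝ᵥ (Bᵀ * diagonal c * B) *ᵥ x = ∑ i, c i * (B *ᵥ x) i ^ 2 := by
  rw [← mulVec_mulVec, ← mulVec_mulVec, dotProduct_mulVec_eq_transpose_mulVec_dotProduct,
    transpose_transpose]
  simp only [dotProduct, mulVec_diagonal]
  exact Finset.sum_congr rfl fun i _ => by ring

theorem det_eq_one_of_isLowerTriangular {L : Matrix (Fin p) (Fin p) ℝ}
    (hL : L.IsLowerTriangular) (hdiag : ∀ i, L i i = 1) : L.det = 1 := by
  simp [det_of_isLowerTriangular L hL, hdiag]

theorem euclNorm_mulVec_le_sigmaMax_mul (M : Matrix (Fin p) (Fin p) ℝ) (x : Fin p → ℝ) :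
    euclNorm (M *ᵥ x) ≤ sigmaMax M * euclNorm x := by
  rcases eq_or_ne x 0 with rfl | hx
  · simp
  have hbdd : BddAbove (Set.range fun y : {y : Fin p → ℝ // y ≠ 0} =>
      euclNorm (M *ᵥ y.1) / euclNorm y.1) := by
    refine ⟨√(∑ i, ∑ j, M i j ^ 2), ?_⟩
    rintro _ ⟨y, rfl⟩
    exact (div_le_iff₀ (euclNorm_pos y.2)).mpr (euclNorm_mulVec_le_frobenius M y.1)
  exact (div_le_iff₀ (euclNorm_pos hx)).mp (le_ciSup hbdd ⟨x, hx⟩)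

theorem sigmaMax_nonneg (M : Matrix (Fin p) (Fin p) ℝ) : 0 ≤ sigmaMax M :=
  Real.iSup_nonneg fun _ => div_nonneg (euclNorm_nonneg _) (euclNorm_nonneg _)

theorem sigmaMin_mul_le_euclNorm_mulVec (M : Matrix (Fin p) (Fin p) ℝ) (x : Fin p → ℝ) :
    sigmaMin M * euclNorm x ≤ euclNorm (M *ᵥ x) := by
  rcases eq_or_ne x 0 with rfl | hx
  · simp
  have hbdd : BddBelow (Set.range fun y : {y : Fin p → ℝ // y ≠ 0} =>
      euclNorm (M *ᵥ y.1) / euclNorm y.1) := by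
    refine ⟨0, ?_⟩
    rintro _ ⟨y, rfl⟩
    exact div_nonneg (euclNorm_nonneg _) (euclNorm_nonneg _)
  exact (le_div_iff₀ (euclNorm_pos hx)).mp (ciInf_le hbdd ⟨x, hx⟩)

theorem sigmaMin_nonneg (M : Matrix (Fin p) (Fin p) ℝ) : 0 ≤ sigmaMin M :=
  Real.iInf_nonneg fun _ => div_nonneg (euclNorm_nonneg _) (euclNorm_nonneg _)

theorem sigmaMin_pos [Nonempty (Fin p)] {M : Matrix (Fin p) (Fin p) ℝ} (hM : IsUnit M.det) :
    0 < sigmaMin M := by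
  set c := sigmaMax M⁻¹
  have hinv : ∀ x, euclNorm x ≤ c * euclNorm (M *ᵥ x) := fun x => by
    simpa [mulVec_mulVec, nonsing_inv_mul _ hM] using
      euclNorm_mulVec_le_sigmaMax_mul M⁻¹ (M *ᵥ x)
  obtain ⟨x₀, hx₀⟩ := exists_ne (0 : Fin p → ℝ)
  have hc : 0 < c := pos_of_mul_pos_left ((euclNorm_pos hx₀).trans_le (hinv x₀))
    (euclNorm_nonneg _)
  have : Nonempty {x : Fin p → ℝ // x ≠ 0} := ⟨⟨x₀, hx₀⟩⟩
  refine (inv_pos.mpr hc).trans_le (le_ciInf fun x => ?_)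
  rw [inv_le_iff_one_le_mul₀' hc, mul_div_assoc', one_le_div (euclNorm_pos x.2)]
  exact hinv x.1

theorem euclNorm_transpose_mulVec_le_sigmaMax_mul (M : Matrix (Fin p) (Fin p) ℝ)
    (x : Fin p → ℝ) :
    euclNorm (Mᵀ *ᵥ x) ≤ sigmaMax M * euclNorm x := by
  have h : euclNorm (Mᵀ *ᵥ x) ^ 2 ≤ sigmaMax M * euclNorm x * euclNorm (Mᵀ *ᵥ x) :=
    calc euclNorm (Mᵀ *ᵥ x) ^ 2 = x ⬝ᵥ M *ᵥ (Mᵀ *ᵥ x) := by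
          rw [dotProduct_mulVec_eq_transpose_mulVec_dotProduct, dotProduct_self_eq_euclNorm_sq]
      _ ≤ euclNorm x * euclNorm (M *ᵥ (Mᵀ *ᵥ x)) := dotProduct_le_euclNorm_mul _ _
      _ ≤ euclNorm x * (sigmaMax M * euclNorm (Mᵀ *ᵥ x)) := by
          gcongr
          · exact euclNorm_nonneg x
          · exact euclNorm_mulVec_le_sigmaMax_mul M _
      _ = sigmaMax M * euclNorm x * euclNorm (Mᵀ *ᵥ x) := by ring
  nlinarith [euclNorm_nonneg (Mᵀ *ᵥ x), mul_nonneg (sigmaMax_nonneg M) (euclNorm_nonneg x)]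

theorem sigmaMin_mul_le_euclNorm_transpose_mulVec {M : Matrix (Fin p) (Fin p) ℝ}
    (hM : IsUnit M.det) (x : Fin p → ℝ) :
    sigmaMin M * euclNorm x ≤ euclNorm (Mᵀ *ᵥ x) := by
  rcases eq_or_ne x 0 with rfl | hx
  · simp
  have h : sigmaMin M * euclNorm x * euclNorm x ≤ euclNorm (Mᵀ *ᵥ x) * euclNorm x :=
    calc sigmaMin M * euclNorm x * euclNorm x = sigmaMin M * (x ⬝ᵥ M *ᵥ (M⁻¹ *ᵥ x)) := by
          rw [mulVec_mulVec, mul_nonsing_inv _ hM, one_mulVec, dotProduct_self_eq_euclNorm_sq]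
          ring
      _ ≤ sigmaMin M * (euclNorm (Mᵀ *ᵥ x) * euclNorm (M⁻¹ *ᵥ x)) := by
          rw [dotProduct_mulVec_eq_transpose_mulVec_dotProduct]
          gcongr
          · exact sigmaMin_nonneg M
          · exact dotProduct_le_euclNorm_mul _ _
      _ = euclNorm (Mᵀ *ᵥ x) * (sigmaMin M * euclNorm (M⁻¹ *ᵥ x)) := by ring
      _ ≤ euclNorm (Mᵀ *ᵥ x) * euclNorm x := by
          gcongr
          · exact euclNorm_nonneg _
          · simpa [mulVec_mulVec, mul_nonsing_inv _ hM] using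
              sigmaMin_mul_le_euclNorm_mulVec M (M⁻¹ *ᵥ x)
  exact le_of_mul_le_mul_right h (euclNorm_pos hx)

theorem euclNorm_mul_transpose_mul_mulVec_le_sigmaMax_mul {U V : Matrix (Fin p) (Fin p) ℝ}
    (hU : Uᵀ * U = 1) (hV : Vᵀ * V = 1) (M : Matrix (Fin p) (Fin p) ℝ) (x : Fin p → ℝ) :
    euclNorm ((U * Mᵀ * V) *ᵥ x) ≤ sigmaMax M * euclNorm x := by
  rw [← mulVec_mulVec, ← mulVec_mulVec, euclNorm_mulVec_of_transpose_mul_self hU,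
    ← euclNorm_mulVec_of_transpose_mul_self hV x]
  exact euclNorm_transpose_mulVec_le_sigmaMax_mul M _

theorem sigmaMin_mul_le_euclNorm_mul_transpose_mul_mulVec {U V M : Matrix (Fin p) (Fin p) ℝ}
    (hU : Uᵀ * U = 1) (hV : Vᵀ * V = 1) (hM : IsUnit M.det) (x : Fin p → ℝ) :
    sigmaMin M * euclNorm x ≤ euclNorm ((U * Mᵀ * V) *ᵥ x) := by
  rw [← mulVec_mulVec, ← mulVec_mulVec, euclNorm_mulVec_of_transpose_mul_self hU,
    ← euclNorm_mulVec_of_transpose_mul_self hV x]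
  exact sigmaMin_mul_le_euclNorm_transpose_mulVec hM _

theorem abs_le_div_sq_of_abs_dotProduct_mulVec_le {B : Matrix (Fin p) (Fin p) ℝ}
    {d : Fin p → ℝ} {s lam : ℝ} (hs : 0 < s) (hlam : 0 ≤ lam)
    (hB : ∀ x, s * euclNorm x ≤ euclNorm (B *ᵥ x))
    (h : ∀ x, |x ⬝ᵥ (Bᵀ * diagonal d * B) *ᵥ x| ≤ lam * euclNorm x ^ 2) (j : Fin p) :
    |d j| ≤ lam / s ^ 2 := by
  obtain ⟨x, hx⟩ :=
    mulVec_surjective_iff_isUnit.mpr (isUnit_of_mul_euclNorm_le hs hB) (Pi.single j 1)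
  have hdj : x ⬝ᵥ (Bᵀ * diagonal d * B) *ᵥ x = d j := by
    simp [dotProduct_mulVec_transpose_mul_diagonal_mul, hx, Pi.single_apply]
  have hxs : euclNorm x ≤ 1 / s := by
    rw [le_div_iff₀' hs, ← euclNorm_single j, ← hx]
    exact hB x
  calc |d j| ≤ lam * euclNorm x ^ 2 := hdj ▸ h x
    _ ≤ lam * (1 / s) ^ 2 := by gcongr; exact euclNorm_nonneg x
    _ = lam / s ^ 2 := by ring

end

theorem stmt12_general {p : ℕ} (P L Q : Matrix (Fin p) (Fin p) ℝ) (d : Fin p → ℝ)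
    (τ lamBar : ℝ) (hτ : 0 < τ) (hlamBar : 0 < lamBar)
    (hP : ∃ e : Equiv.Perm (Fin p), P = e.permMatrix ℝ)
    (hLdiag : ∀ i, L i i = 1) (hLtri : ∀ i j : Fin p, i < j → L i j = 0)
    (hQ : Q * Qᵀ = 1)
    (hnorm : ∀ x : Fin p → ℝ,
      |x ⬝ᵥ (Pᵀ * L * Q * Matrix.diagonal d * Qᵀ * Lᵀ * P).mulVec x| ≤
        lamBar * euclNorm x ^ 2) :
    lambdaMax (Pᵀ * L * Q * (Matrix.diagonal fun j => max τ |d j|) * Qᵀ * Lᵀ * P) ≤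
      sigmaMax L ^ 2 * max τ (lamBar / sigmaMin L ^ 2) := by
  obtain ⟨σ, rfl⟩ := hP
  set B := Qᵀ * Lᵀ * σ.permMatrix ℝ
  have hconj : ∀ D,
      (σ.permMatrix ℝ)ᵀ * L * Q * D * Qᵀ * Lᵀ * σ.permMatrix ℝ = Bᵀ * D * B := fun D => by
    simp only [B, transpose_mul, transpose_transpose, Matrix.mul_assoc]
  have hQT : Qᵀᵀ * Qᵀ = 1 := by rwa [transpose_transpose]
  have hPP := transpose_permMatrix_mul_self σ
  have hL : IsUnit L.det := by
    rw [det_eq_one_of_isLowerTriangular (fun i j h => hLtri i j h) hLdiag]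
    exact isUnit_one
  have hd : ∀ j, |d j| ≤ lamBar / sigmaMin L ^ 2 := fun j =>
    have : Nonempty (Fin p) := ⟨j⟩
    abs_le_div_sq_of_abs_dotProduct_mulVec_le (sigmaMin_pos hL) hlamBar.le
      (sigmaMin_mul_le_euclNorm_mul_transpose_mul_mulVec hQT hPP hL)
      (by simpa only [hconj] using hnorm) j
  have hmax : 0 ≤ max τ (lamBar / sigmaMin L ^ 2) := le_max_of_le_left hτ.le
  refine Real.iSup_le (fun x => ?_) (mul_nonneg (sq_nonneg _) hmax)
  rw [hconj, dotProduct_mulVec_transpose_mul_diagonal_mul,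
    div_le_iff₀ (pow_pos (euclNorm_pos x.2) 2)]
  calc ∑ i, max τ |d i| * (B *ᵥ x.1) i ^ 2
      ≤ max τ (lamBar / sigmaMin L ^ 2) * euclNorm (B *ᵥ x.1) ^ 2 :=
        sum_mul_sq_le_mul_euclNorm_sq (fun i => max_le_max le_rfl (hd i)) _
    _ ≤ max τ (lamBar / sigmaMin L ^ 2) * (sigmaMax L * euclNorm x.1) ^ 2 := by
        gcongr
        · exact euclNorm_nonneg _
        · exact euclNorm_mul_transpose_mul_mulVec_le_sigmaMax_mul hQT hPP L x.1
    _ = sigmaMax L ^ 2 * max τ (lamBar / sigmaMin L ^ 2) * euclNorm x.1 ^ 2 := by ring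

/-- Upper eigenvalue bound of Theorem 4 of the paper: with `H̄ = Pᵀ L Q Λ Qᵀ Lᵀ P`
whose spectral norm is at most `λ̄` (equivalently `|xᵀ H̄ x| ≤ λ̄ ‖x‖²` for all `x`),
and `H̄̄ = Pᵀ L Q Λ̄ Qᵀ Lᵀ P` the clipped version (`λ̄_j = max{τ, |λ_j|}`, `τ > 0`),
one has `λ_max(H̄̄) ≤ σ_max(L)² max{τ, λ̄/σ_min(L)²}`. -/
theorem stmt12 {p : ℕ} (P L Q : Matrix (Fin p) (Fin p) ℝ) (d : Fin p → ℝ)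
    (τ lamBar : ℝ) (hτ : 0 < τ) (hlamBar : 0 < lamBar)
    (hP : ∃ e : Equiv.Perm (Fin p), P = e.permMatrix ℝ)
    (hLdiag : ∀ i, L i i = 1) (hLtri : ∀ i j : Fin p, i < j → L i j = 0)
    (hQ : Q * Qᵀ = 1) (hQ' : Qᵀ * Q = 1)
    (hnorm : ∀ x : Fin p → ℝ,
      |x ⬝ᵥ (Pᵀ * L * Q * Matrix.diagonal d * Qᵀ * Lᵀ * P).mulVec x| ≤
        lamBar * euclNorm x ^ 2) :
    lambdaMax (Pᵀ * L * Q * (Matrix.diagonal fun j => max τ |d j|) * Qᵀ * Lᵀ * P) ≤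
      sigmaMax L ^ 2 * max τ (lamBar / sigmaMin L ^ 2) :=
  stmt12_general P L Q d τ lamBar hτ hlamBar hP hLdiag hLtri hQ hnorm
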